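/- arXiv:1104.4960 — 8 statements merged into one kernel-verified Lean document; each statement's English description precedes it below -/
import Mathlib

section
/- Let a,b,c,d,e,f ∈ ℂ and let T ∈ M_4(ℂ) be the strictly upper triangular matrix with rows (0,a,b,c), (0,0,d,e), (0,0,0,f), (0,0,0,0). Then tr[T(T²(T*)³ − (T*)³T²)TT*] = |a|²|d|²|f|²(|a|² + |b|² − |e|² − |f|²) and tr[T²(T(T*)³ − (T*)³T)T²(T*)²] = |a|²|d|⁴|f|²(|a|² − |f|²). -/
/-!
For the strictly upper triangular `T` one has `T³ = (a d f) E₀₃`, a rank-one matrix `N`. Both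
traces have the shape `tr[P (Q N* - N* Q) P P*]` with `P Q = Q P = N`, namely `(P, Q) = (T, T²)`
and `(P, Q) = (T², T)`. Cyclicity of the trace turns this into
`|a d f|² ((P P*)₀₀ - (P* P)₃₃)`: squared norm of row `0` of `P` minus that of column `3`.
-/

open Matrix

namespace Matrix

variable {n R : Type*} [Fintype n] [DecidableEq n] [CommRing R] [StarRing R]

theorem trace_mul_commutator_conjTranspose_single {P Q : Matrix n n R} {i j : n} {α : R}
    (hPQ : P * Q = single i j α) (hQP : Q * P = single i j α) :
    trace (P * (Q * (single i j α)ᴴ - (single i j α)ᴴ * Q) * P * Pᴴ)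
      = star α * α * ((P * Pᴴ) i i - (Pᴴ * P) j j) := by
  set N := single i j α
  have hN : Nᴴ = single j i (star α) := conjTranspose_single ..
  have hsplit : P * (Q * Nᴴ - Nᴴ * Q) * P * Pᴴ
      = P * Q * Nᴴ * (P * Pᴴ) - P * Nᴴ * (Q * P) * Pᴴ := by
    noncomm_ring
  have hcycle₁ : trace (N * Nᴴ * (P * Pᴴ)) = trace (Nᴴ * (P * Pᴴ) * N) := by
    rw [Matrix.mul_assoc, trace_mul_comm]
  have hcycle₂ : trace (P * Nᴴ * N * Pᴴ) = trace (N * (Pᴴ * P) * Nᴴ) := by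
    rw [trace_mul_cycle, trace_mul_cycle]
    simp only [Matrix.mul_assoc]
  rw [hsplit, hPQ, hQP, trace_sub, hcycle₁, hcycle₂, hN, single_mul_mul_single,
    single_mul_mul_single, trace_single_eq_same, trace_single_eq_same]
  ring

end Matrix

section StrictUpperTriangularFinFour

variable {R : Type*} [CommRing R]

theorem strictUpperTriangular_fin_four_sq (a b c d e f : R) :
    !![0, a, b, c; 0, 0, d, e; 0, 0, 0, f; 0, 0, 0, 0] ^ 2
      = !![0, 0, a * d, a * e + b * f; 0, 0, 0, d * f; 0, 0, 0, 0; 0, 0, 0, 0] := by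
  rw [sq]
  ext i j
  fin_cases i <;> fin_cases j <;> simp [mul_apply, Fin.sum_univ_four]

theorem strictUpperTriangular_fin_four_pow_three (a b c d e f : R) :
    !![0, a, b, c; 0, 0, d, e; 0, 0, 0, f; 0, 0, 0, 0] ^ 3 = single 0 3 (a * d * f) := by
  rw [pow_succ, strictUpperTriangular_fin_four_sq]
  ext i j
  fin_cases i <;> fin_cases j <;> simp [mul_apply, Fin.sum_univ_four, single]

end StrictUpperTriangularFinFour

theorem trace_formulas_psi4_psi7 (a b c d e f : ℂ)
    (T : Matrix (Fin 4) (Fin 4) ℂ)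
    (hT : T = !![0, a, b, c; 0, 0, d, e; 0, 0, 0, f; 0, 0, 0, 0]) :
    (T * (T ^ 2 * Tᴴ ^ 3 - Tᴴ ^ 3 * T ^ 2) * T * Tᴴ).trace
      = ((‖a‖ ^ 2 * ‖d‖ ^ 2 * ‖f‖ ^ 2 *
          (‖a‖ ^ 2 + ‖b‖ ^ 2 - ‖e‖ ^ 2
            - ‖f‖ ^ 2) : ℝ) : ℂ) ∧
    (T ^ 2 * (T * Tᴴ ^ 3 - Tᴴ ^ 3 * T) * T ^ 2 * Tᴴ ^ 2).trace
      = ((‖a‖ ^ 2 * ‖d‖ ^ 4 * ‖f‖ ^ 2 *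
          (‖a‖ ^ 2 - ‖f‖ ^ 2) : ℝ) : ℂ) := by
  have hT3 : T ^ 3 = single 0 3 (a * d * f) := hT ▸ strictUpperTriangular_fin_four_pow_three ..
  rw [← conjTranspose_pow, hT3, ← conjTranspose_pow T 2,
    trace_mul_commutator_conjTranspose_single (Q := T ^ 2) (by rw [← pow_succ', hT3])
      (by rw [← pow_succ, hT3]),
    trace_mul_commutator_conjTranspose_single (Q := T) (by rw [← pow_succ, hT3])
      (by rw [← pow_succ', hT3]), hT, strictUpperTriangular_fin_four_sq]
  have hnorm_pow_four (z : ℂ) : (‖z‖ : ℂ) ^ 4 = ((‖z‖ : ℂ) ^ 2) ^ 2 := by ring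
  push_cast
  simp only [hnorm_pow_four, ← Complex.conj_mul']
  constructor <;> simp [mul_apply, Fin.sum_univ_four] <;> ring
end

section
/- Let a,b,c,e,f ∈ ℂ and let T ∈ M_4(ℂ) be the strictly upper triangular matrix with rows (0,a,b,c), (0,0,0,e), (0,0,0,f), (0,0,0,0) (i.e., the general nilpotent form with d = 0). Then tr[T(T(T*)² − (T*)²T)TT*] = |ae + bf|²(|a|² + |b|² − |e|² − |f|²) and tr[T²T*(T*T − TT*)T*T²T*] = conj(c)·(ae + bf)·tr[T(T(T*)² − (T*)²T)TT*]. -/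
/-!
With `d = 0` the matrix `T` squares to the matrix unit `(ae + bf) E₀₃`. For any `T` with
`T² = s Eᵢⱼ`, both traces collapse, by cyclicity, to the single entry
`(T* (T*T - TT*) T*)ⱼᵢ`: the first trace is `s` times it and the second is `s² conj(Tᵢⱼ)` times
it. For the given `T` that entry is `conj(ae + bf) (|a|² + |b|² - |e|² - |f|²)`.
-/

open Matrix

section SqEqSingle

variable {n R : Type*} [Fintype n] [DecidableEq n] [CommRing R] [StarRing R]
  {T : Matrix n n R} {i j : n} {s : R}

theorem trace_mul_sub_mul_mul_conjTranspose_of_sq_eq_single (hT : T ^ 2 = single i j s) :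
    (T * (T * Tᴴ ^ 2 - Tᴴ ^ 2 * T) * T * Tᴴ).trace
      = s * (Tᴴ * (Tᴴ * T - T * Tᴴ) * Tᴴ) j i := by
  have hexpand : T * (T * Tᴴ ^ 2 - Tᴴ ^ 2 * T) * T * Tᴴ
      = T ^ 2 * (Tᴴ ^ 2 * T * Tᴴ) - T * (Tᴴ ^ 2 * T ^ 2 * Tᴴ) := by
    simp only [sq, Matrix.mul_sub, Matrix.sub_mul, Matrix.mul_assoc]
  have hcycle : (T * (Tᴴ ^ 2 * T ^ 2 * Tᴴ)).trace = (T ^ 2 * (Tᴴ * T * Tᴴ ^ 2)).trace := by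
    rw [show T * (Tᴴ ^ 2 * T ^ 2 * Tᴴ) = T * Tᴴ ^ 2 * (T ^ 2 * Tᴴ) by simp only [Matrix.mul_assoc],
      trace_mul_comm]
    simp only [Matrix.mul_assoc]
  rw [hexpand, trace_sub, hcycle, hT, trace_single_mul, trace_single_mul, smul_eq_mul, smul_eq_mul,
    ← mul_sub, ← Matrix.sub_apply]
  congr 2
  simp only [sq, Matrix.mul_sub, Matrix.sub_mul, Matrix.mul_assoc]

theorem trace_sq_mul_commutator_eq_of_sq_eq_single (hT : T ^ 2 = single i j s) :
    (T ^ 2 * Tᴴ * (Tᴴ * T - T * Tᴴ) * Tᴴ * T ^ 2 * Tᴴ).trace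
      = star (T i j) * s * (T * (T * Tᴴ ^ 2 - Tᴴ ^ 2 * T) * T * Tᴴ).trace := by
  have hsandwich : T ^ 2 * Tᴴ * (Tᴴ * T - T * Tᴴ) * Tᴴ * T ^ 2
      = single i j (s * (Tᴴ * (Tᴴ * T - T * Tᴴ) * Tᴴ) j i * s) := by
    rw [hT, ← single_mul_mul_single]
    simp only [Matrix.mul_assoc]
  rw [hsandwich, trace_single_mul, smul_eq_mul, conjTranspose_apply,
    trace_mul_sub_mul_mul_conjTranspose_of_sq_eq_single hT]
  ring

end SqEqSingle

section FourByFour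

variable {R : Type*} [CommRing R] (a b c e f : R)

theorem sq_fin_four_nilpotent :
    !![0, a, b, c; 0, 0, 0, e; 0, 0, 0, f; 0, 0, 0, 0] ^ 2 = single 0 3 (a * e + b * f) := by
  ext i j
  fin_cases i <;> fin_cases j <;> simp [sq, mul_apply, Fin.sum_univ_four, single]

theorem conjTranspose_mul_commutator_mul_conjTranspose_apply_of_eq_fin_four_nilpotent [StarRing R]
    {T : Matrix (Fin 4) (Fin 4) R} (hT : T = !![0, a, b, c; 0, 0, 0, e; 0, 0, 0, f; 0, 0, 0, 0]) :
    (Tᴴ * (Tᴴ * T - T * Tᴴ) * Tᴴ) 3 0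
      = star (a * e + b * f) * (a * star a + b * star b - e * star e - f * star f) := by
  subst hT
  simp only [mul_apply, Matrix.sub_apply, conjTranspose_apply, Fin.sum_univ_four, of_apply,
    cons_val', cons_val_zero, cons_val_one, cons_val_two, cons_val_three, empty_val',
    cons_val_fin_one, head_cons, tail_cons, head_fin_const, star_zero, star_add, star_mul']
  ring

end FourByFour

theorem trace_formulas_d_eq_zero (a b c e f : ℂ)
    (T : Matrix (Fin 4) (Fin 4) ℂ)
    (hT : T = !![0, a, b, c; 0, 0, 0, e; 0, 0, 0, f; 0, 0, 0, 0]) :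
    (T * (T * Tᴴ ^ 2 - Tᴴ ^ 2 * T) * T * Tᴴ).trace
      = ((‖a * e + b * f‖ ^ 2 *
          (‖a‖ ^ 2 + ‖b‖ ^ 2 - ‖e‖ ^ 2
            - ‖f‖ ^ 2) : ℝ) : ℂ) ∧
    (T ^ 2 * Tᴴ * (Tᴴ * T - T * Tᴴ) * Tᴴ * T ^ 2 * Tᴴ).trace
      = (starRingEnd ℂ) c * (a * e + b * f) *
          (T * (T * Tᴴ ^ 2 - Tᴴ ^ 2 * T) * T * Tᴴ).trace := by
  have hsq : T ^ 2 = single 0 3 (a * e + b * f) := hT ▸ sq_fin_four_nilpotent a b c e f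
  have hc : star (T 0 3) = (starRingEnd ℂ) c := by rw [hT]; rfl
  constructor
  · rw [trace_mul_sub_mul_mul_conjTranspose_of_sq_eq_single hsq,
      conjTranspose_mul_commutator_mul_conjTranspose_apply_of_eq_fin_four_nilpotent a b c e f hT]
    simp only [Complex.star_def, ← mul_assoc, Complex.mul_conj']
    push_cast
    ring
  · rw [trace_sq_mul_commutator_eq_of_sq_eq_single hsq, hc]
end

section
/- Let b,c,d,e,f ∈ ℂ and let T ∈ M_4(ℂ) be the strictly upper triangular matrix with rows (0,0,b,c), (0,0,d,e), (0,0,0,f), (0,0,0,0) (i.e., the general nilpotent form with a = 0). Then tr[T(T(T*)² − (T*)²T)TT*] = |f|²[(|b|² + |d|²)(|b|² + |d|² − |c|² − |e|² − |f|²) + |b·conj(c) + d·conj(e)|²] and tr[T²T*(T*T − TT*)T*T²T*] = f·(b·conj(c) + d·conj(e))·tr[T(T(T*)² − (T*)²T)TT*]. -/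
open Matrix

/-! Writing `‖z‖ ^ 2 = z * conj z` turns both claims into polynomial identities in `b, c, d, e, f`
and their conjugates, which hold once the `4 × 4` products are multiplied out entrywise. -/

namespace Matrix

variable {α : Type*}

theorem mul_fin_four [AddCommMonoid α] [Mul α]
    (a₁₁ a₁₂ a₁₃ a₁₄ a₂₁ a₂₂ a₂₃ a₂₄ a₃₁ a₃₂ a₃₃ a₃₄ a₄₁ a₄₂ a₄₃ a₄₄
      b₁₁ b₁₂ b₁₃ b₁₄ b₂₁ b₂₂ b₂₃ b₂₄ b₃₁ b₃₂ b₃₃ b₃₄ b₄₁ b₄₂ b₄₃ b₄₄ : α) :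
    !![a₁₁, a₁₂, a₁₃, a₁₄;
       a₂₁, a₂₂, a₂₃, a₂₄;
       a₃₁, a₃₂, a₃₃, a₃₄;
       a₄₁, a₄₂, a₄₃, a₄₄] * !![b₁₁, b₁₂, b₁₃, b₁₄;
                                b₂₁, b₂₂, b₂₃, b₂₄;
                                b₃₁, b₃₂, b₃₃, b₃₄;
                                b₄₁, b₄₂, b₄₃, b₄₄] =
    !![a₁₁*b₁₁ + a₁₂*b₂₁ + a₁₃*b₃₁ + a₁₄*b₄₁, a₁₁*b₁₂ + a₁₂*b₂₂ + a₁₃*b₃₂ + a₁₄*b₄₂,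
         a₁₁*b₁₃ + a₁₂*b₂₃ + a₁₃*b₃₃ + a₁₄*b₄₃, a₁₁*b₁₄ + a₁₂*b₂₄ + a₁₃*b₃₄ + a₁₄*b₄₄;
       a₂₁*b₁₁ + a₂₂*b₂₁ + a₂₃*b₃₁ + a₂₄*b₄₁, a₂₁*b₁₂ + a₂₂*b₂₂ + a₂₃*b₃₂ + a₂₄*b₄₂,
         a₂₁*b₁₃ + a₂₂*b₂₃ + a₂₃*b₃₃ + a₂₄*b₄₃, a₂₁*b₁₄ + a₂₂*b₂₄ + a₂₃*b₃₄ + a₂₄*b₄₄;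
       a₃₁*b₁₁ + a₃₂*b₂₁ + a₃₃*b₃₁ + a₃₄*b₄₁, a₃₁*b₁₂ + a₃₂*b₂₂ + a₃₃*b₃₂ + a₃₄*b₄₂,
         a₃₁*b₁₃ + a₃₂*b₂₃ + a₃₃*b₃₃ + a₃₄*b₄₃, a₃₁*b₁₄ + a₃₂*b₂₄ + a₃₃*b₃₄ + a₃₄*b₄₄;
       a₄₁*b₁₁ + a₄₂*b₂₁ + a₄₃*b₃₁ + a₄₄*b₄₁, a₄₁*b₁₂ + a₄₂*b₂₂ + a₄₃*b₃₂ + a₄₄*b₄₂,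
         a₄₁*b₁₃ + a₄₂*b₂₃ + a₄₃*b₃₃ + a₄₄*b₄₃, a₄₁*b₁₄ + a₄₂*b₂₄ + a₄₃*b₃₄ + a₄₄*b₄₄] := by
  ext i j
  fin_cases i <;> fin_cases j <;> simp [mul_apply, Fin.sum_univ_succ, ← add_assoc]

theorem conjTranspose_fin_four_of [Star α]
    (a₁₁ a₁₂ a₁₃ a₁₄ a₂₁ a₂₂ a₂₃ a₂₄ a₃₁ a₃₂ a₃₃ a₃₄ a₄₁ a₄₂ a₄₃ a₄₄ : α) :
    !![a₁₁, a₁₂, a₁₃, a₁₄;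
       a₂₁, a₂₂, a₂₃, a₂₄;
       a₃₁, a₃₂, a₃₃, a₃₄;
       a₄₁, a₄₂, a₄₃, a₄₄]ᴴ =
    !![star a₁₁, star a₂₁, star a₃₁, star a₄₁;
       star a₁₂, star a₂₂, star a₃₂, star a₄₂;
       star a₁₃, star a₂₃, star a₃₃, star a₄₃;
       star a₁₄, star a₂₄, star a₃₄, star a₄₄] := by
  ext i j
  fin_cases i <;> fin_cases j <;> rfl

theorem trace_fin_four_of [AddCommMonoid α]
    (a₁₁ a₁₂ a₁₃ a₁₄ a₂₁ a₂₂ a₂₃ a₂₄ a₃₁ a₃₂ a₃₃ a₃₄ a₄₁ a₄₂ a₄₃ a₄₄ : α) :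
    trace !![a₁₁, a₁₂, a₁₃, a₁₄;
             a₂₁, a₂₂, a₂₃, a₂₄;
             a₃₁, a₃₂, a₃₃, a₃₄;
             a₄₁, a₄₂, a₄₃, a₄₄] = a₁₁ + a₂₂ + a₃₃ + a₄₄ := by
  simp [trace, Fin.sum_univ_four]

end Matrix

theorem trace_formulas_a_eq_zero (b c d e f : ℂ)
    (T : Matrix (Fin 4) (Fin 4) ℂ)
    (hT : T = !![0, 0, b, c; 0, 0, d, e; 0, 0, 0, f; 0, 0, 0, 0]) :
    (T * (T * Tᴴ ^ 2 - Tᴴ ^ 2 * T) * T * Tᴴ).trace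
      = ((‖f‖ ^ 2 *
          ((‖b‖ ^ 2 + ‖d‖ ^ 2) *
            (‖b‖ ^ 2 + ‖d‖ ^ 2 - ‖c‖ ^ 2
              - ‖e‖ ^ 2 - ‖f‖ ^ 2)
            + ‖b * (starRingEnd ℂ) c + d * (starRingEnd ℂ) e‖ ^ 2) : ℝ) : ℂ) ∧
    (T ^ 2 * Tᴴ * (Tᴴ * T - T * Tᴴ) * Tᴴ * T ^ 2 * Tᴴ).trace
      = f * (b * (starRingEnd ℂ) c + d * (starRingEnd ℂ) e) *
          (T * (T * Tᴴ ^ 2 - Tᴴ ^ 2 * T) * T * Tᴴ).trace := by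
  subst hT
  push_cast [← Complex.mul_conj', map_add, map_mul, Complex.conj_conj]
  simp only [sq, conjTranspose_fin_four_of, star_zero, mul_fin_four, of_sub_of, cons_sub_cons,
    empty_sub_empty, trace_fin_four_of, mul_zero, zero_mul, add_zero, zero_add, sub_zero,
    Complex.star_def]
  constructor <;> ring
end

section
/- Let a,b,c,d ∈ ℂ and let T ∈ M_4(ℂ) be the strictly upper triangular matrix with rows (0,a,b,c), (0,0,d,b), (0,0,0,a), (0,0,0,0). Then T is unitarily equivalent to its transpose Tᵗ via the symmetric unitary matrix U whose rows are (0,0,0,1), (0,0,1,0), (0,1,0,0), (1,0,0,0), i.e., U T U* = Tᵗ; consequently T is UECSM. -/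
/-! If `V` is unitary and `U = Vᵀ V` satisfies `U T Uᴴ = Tᵀ`, then `S = V T Vᴴ` is symmetric
and `T = Vᴴ S V`. The antidiagonal `U` is a real symmetric involution, so for scalars with
`α² + β² = 0` and `2αβ = 1`, e.g. `α = (1 + i)/2`, `β = (1 - i)/2`, the matrix `V = α + βU` is a
symmetric unitary square root of `U`. -/

open Matrix

/-- `T` is unitarily equivalent to a complex symmetric matrix. -/
def UECSM {n : ℕ} (T : Matrix (Fin n) (Fin n) ℂ) : Prop :=
  ∃ U S : Matrix (Fin n) (Fin n) ℂ,
    U ∈ Matrix.unitaryGroup (Fin n) ℂ ∧ S = Sᵀ ∧ T = U * S * Uᴴ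

namespace Matrix

section
variable {n R : Type*} [Fintype n] [DecidableEq n] [CommRing R] [StarRing R]
  {T V : Matrix n n R}

theorem transpose_mul_mul_conjTranspose_eq_self (hV : V ∈ unitaryGroup n R)
    (hT : (Vᵀ * V) * T * (Vᵀ * V)ᴴ = Tᵀ) : (V * T * Vᴴ)ᵀ = V * T * Vᴴ := by
  have hVV : V * Vᴴ = 1 := mem_unitaryGroup_iff.mp hV
  have hVVt : Vᴴᵀ * Vᵀ = 1 := by rw [← transpose_mul, hVV, transpose_one]
  have hright : (Vᵀ * V)ᴴ * Vᵀ = Vᴴ := by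
    rw [conjTranspose_mul, conjTranspose_transpose_eq_transpose_conjTranspose, Matrix.mul_assoc,
      hVVt, Matrix.mul_one]
  calc (V * T * Vᴴ)ᵀ = Vᴴᵀ * Tᵀ * Vᵀ := by simp only [transpose_mul, Matrix.mul_assoc]
    _ = Vᴴᵀ * Vᵀ * (V * T * ((Vᵀ * V)ᴴ * Vᵀ)) := by rw [← hT]; simp only [Matrix.mul_assoc]
    _ = V * T * Vᴴ := by rw [hVVt, hright, Matrix.one_mul]

end

section
variable {n : Type*} [Fintype n] [DecidableEq n] {J : Matrix n n ℂ}

noncomputable def involutionSqrt (J : Matrix n n ℂ) : Matrix n n ℂ :=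
  ((1 + Complex.I) / 2) • 1 + ((1 - Complex.I) / 2) • J

theorem transpose_involutionSqrt_mul_self (hJJ : J * J = 1) (hJt : Jᵀ = J) :
    (involutionSqrt J)ᵀ * involutionSqrt J = J := by
  set α : ℂ := (1 + Complex.I) / 2
  set β : ℂ := (1 - Complex.I) / 2
  have hsq : α * α + β * β = 0 := by linear_combination (1 / 2 : ℂ) * Complex.I_sq
  have hcross : α * β + β * α = 1 := by linear_combination (-1 / 2 : ℂ) * Complex.I_sq
  calc (involutionSqrt J)ᵀ * involutionSqrt J = (α * α + β * β) • 1 + (α * β + β * α) • J := by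
        simp only [involutionSqrt, transpose_add, transpose_smul, transpose_one, hJt, add_mul,
          mul_add, smul_mul_smul, Matrix.one_mul, Matrix.mul_one, hJJ]
        module
    _ = J := by rw [hsq, hcross, zero_smul, zero_add, one_smul]

theorem involutionSqrt_mem_unitaryGroup (hJJ : J * J = 1) (hJh : Jᴴ = J) :
    involutionSqrt J ∈ unitaryGroup n ℂ := by
  set α : ℂ := (1 + Complex.I) / 2
  set β : ℂ := (1 - Complex.I) / 2
  have hα : star α = β := by simp [α, β, sub_eq_add_neg]
  have hβ : star β = α := by simp [α, β]
  have hsq : α * star α + β * star β = 1 := by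
    rw [hα, hβ]; linear_combination (-1 / 2 : ℂ) * Complex.I_sq
  have hcross : α * star β + β * star α = 0 := by
    rw [hα, hβ]; linear_combination (1 / 2 : ℂ) * Complex.I_sq
  rw [mem_unitaryGroup_iff, star_eq_conjTranspose]
  calc involutionSqrt J * (involutionSqrt J)ᴴ
        = (α * star α + β * star β) • 1 + (α * star β + β * star α) • J := by
        simp only [involutionSqrt, conjTranspose_add, conjTranspose_smul, conjTranspose_one, hJh,
          add_mul, mul_add, smul_mul_smul, Matrix.one_mul, Matrix.mul_one, hJJ]
        module
    _ = 1 := by rw [hsq, hcross, zero_smul, add_zero, one_smul]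

end

end Matrix

theorem UECSM.of_transpose_mul_self_mul_conjTranspose {n : ℕ} {T V : Matrix (Fin n) (Fin n) ℂ}
    (hV : V ∈ unitaryGroup (Fin n) ℂ) (hT : (Vᵀ * V) * T * (Vᵀ * V)ᴴ = Tᵀ) : UECSM T := by
  refine ⟨Vᴴ, V * T * Vᴴ, Unitary.star_mem hV,
    (transpose_mul_mul_conjTranspose_eq_self hV hT).symm, ?_⟩
  have hVV : Vᴴ * V = 1 := mem_unitaryGroup_iff'.mp hV
  simp only [conjTranspose_conjTranspose, ← Matrix.mul_assoc, hVV, Matrix.one_mul]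
  rw [Matrix.mul_assoc, hVV, Matrix.mul_one]

theorem transpose_via_antidiagonal_unitary (a b c d : ℂ)
    (T : Matrix (Fin 4) (Fin 4) ℂ)
    (hT : T = !![0, a, b, c; 0, 0, d, b; 0, 0, 0, a; 0, 0, 0, 0])
    (U : Matrix (Fin 4) (Fin 4) ℂ)
    (hU : U = !![0, 0, 0, 1; 0, 0, 1, 0; 0, 1, 0, 0; 1, 0, 0, 0]) :
    U ∈ Matrix.unitaryGroup (Fin 4) ℂ ∧ U = Uᵀ ∧ U * T * Uᴴ = Tᵀ ∧ UECSM T := by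
  have hUU : U * U = 1 := by
    subst hU; ext i j; fin_cases i <;> fin_cases j <;> simp [mul_apply, Fin.sum_univ_four]
  have hUh : Uᴴ = U := by
    subst hU; ext i j; fin_cases i <;> fin_cases j <;> simp
  have hUt : Uᵀ = U := by
    subst hU; ext i j; fin_cases i <;> fin_cases j <;> simp
  have hUTU : U * T * Uᴴ = Tᵀ := by
    subst hT hU; ext i j; fin_cases i <;> fin_cases j <;> simp [mul_apply, Fin.sum_univ_four]
  refine ⟨mem_unitaryGroup_iff.mpr ?_, hUt.symm, hUTU, ?_⟩
  · rw [star_eq_conjTranspose, hUh, hUU]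
  · refine UECSM.of_transpose_mul_self_mul_conjTranspose
      (involutionSqrt_mem_unitaryGroup hUU hUh) ?_
    rwa [transpose_involutionSqrt_mul_self hUU hUt]
end

section
/- Suppose T ∈ M_3(ℂ) has distinct eigenvalues λ_1, λ_2, λ_3 with corresponding unit eigenvectors x_1, x_2, x_3, and let y_1, y_2, y_3 be unit eigenvectors of T* corresponding to conj(λ_1), conj(λ_2), conj(λ_3). Let X = (x_1 | x_2 | x_3) and Y = (y_1 | y_2 | y_3) be the 3×3 matrices with these columns. If |⟨x_i, x_j⟩| = |⟨y_i, y_j⟩| for all 1 ≤ i < j ≤ 3, then |det X| = |det Y|. -/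
open Matrix

/-- The standard Hermitian inner product on `ℂⁿ`, linear in the first slot. -/
noncomputable def hinner {n : ℕ} (x y : Fin n → ℂ) : ℂ := ∑ i, x i * (starRingEnd ℂ) (y i)

/-!
Eigenvectors of `T` and `Tᴴ` for `λⱼ` and `conj λᵢ` with `i ≠ j` are orthogonal, so
`Yᴴ X = D := diag ⟨xᵢ, yᵢ⟩`. Hence `|det X| |det Y| = ∏ |dᵢ|`, and the Gram matrix `Yᴴ Y` is
`D G⁻¹ Dᴴ`, where the Gram matrix `G = Xᴴ X` has unit diagonal and `det G = |det X|²`; so it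
suffices to show `|det G| = ∏ |dᵢ|`. Unit length of `yᵢ` reads `|dᵢ|² adj(G)ᵢᵢ = det G`. The angle
condition for the pair `(0, 1)` reads `|adj(G)₀₁|² = |G₀₁|² adj(G)₀₀ adj(G)₁₁`, and Jacobi's
identity `adj(G)₀₀ adj(G)₁₁ - |adj(G)₀₁|² = det G` turns it into
`det G = adj(G)₀₀ adj(G)₁₁ adj(G)₂₂`. Multiplying the three unit-length equations gives
`(det G)³ = ∏ |dᵢ|² · det G`.
-/

section Hinner

variable {n : ℕ}

lemma hinner_smul_left (c : ℂ) (u v : Fin n → ℂ) : hinner (c • u) v = c * hinner u v := by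
  simp [hinner, Finset.mul_sum, mul_assoc]

lemma hinner_smul_right (c : ℂ) (u v : Fin n → ℂ) :
    hinner u (c • v) = starRingEnd ℂ c * hinner u v := by
  simp only [hinner, Pi.smul_apply, smul_eq_mul, map_mul, Finset.mul_sum]
  exact Finset.sum_congr rfl fun i _ => by ring

lemma hinner_mulVec_left (A : Matrix (Fin n) (Fin n) ℂ) (u v : Fin n → ℂ) :
    hinner (A *ᵥ u) v = hinner u (Aᴴ *ᵥ v) := by
  simp only [hinner, mulVec, dotProduct, conjTranspose_apply, map_sum, map_mul,
    Finset.sum_mul, Finset.mul_sum, Complex.star_def, Complex.conj_conj]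
  rw [Finset.sum_comm]
  exact Finset.sum_congr rfl fun i _ => Finset.sum_congr rfl fun j _ => by ring

lemma ne_zero_of_hinner_self_ne_zero {u : Fin n → ℂ} (hu : hinner u u ≠ 0) : u ≠ 0 := by
  rintro rfl
  simp [hinner] at hu

lemma hinner_eq_zero_of_eigenvalue_ne {A : Matrix (Fin n) (Fin n) ℂ} {μ ν : ℂ}
    {u v : Fin n → ℂ} (hu : A *ᵥ u = μ • u) (hv : Aᴴ *ᵥ v = starRingEnd ℂ ν • v)
    (hμν : μ ≠ ν) : hinner u v = 0 := by
  have h := hinner_mulVec_left A u v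
  rw [hu, hv, hinner_smul_left, hinner_smul_right, Complex.conj_conj] at h
  have : (μ - ν) * hinner u v = 0 := by linear_combination h
  exact (mul_eq_zero.mp this).resolve_left (sub_ne_zero.mpr hμν)

end Hinner

lemma conjTranspose_mul_apply_eq_hinner {m : ℕ} {ι κ : Type*} (x : ι → Fin m → ℂ)
    (y : κ → Fin m → ℂ) (i : κ) (j : ι) :
    ((of fun r c => y c r)ᴴ * of fun r c => x c r) i j = hinner (x j) (y i) := by
  simp [mul_apply, hinner, mul_comm]

lemma conjTranspose_mul_eq_diagonal_of_eigenvectors {n : ℕ} {T : Matrix (Fin n) (Fin n) ℂ}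
    {μ : Fin n → ℂ} (hμ : Function.Injective μ) {x y : Fin n → Fin n → ℂ}
    (hx : ∀ i, T *ᵥ x i = μ i • x i) (hy : ∀ i, Tᴴ *ᵥ y i = starRingEnd ℂ (μ i) • y i) :
    (of fun r c => y c r)ᴴ * (of fun r c => x c r) = diagonal fun i => hinner (x i) (y i) := by
  ext i j
  rw [conjTranspose_mul_apply_eq_hinner]
  by_cases h : i = j
  · subst h
    simp
  · rw [diagonal_apply_ne _ h]
    exact hinner_eq_zero_of_eigenvalue_ne (hx j) (hy i) (hμ.ne (Ne.symm h))

lemma isUnit_of_eigenvector_cols {K m : Type*} [Field K] [Fintype m] [DecidableEq m]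
    {T : Matrix m m K} {μ : m → K} (hμ : Function.Injective μ) {v : m → m → K}
    (hv : ∀ i, T *ᵥ v i = μ i • v i) (hv0 : ∀ i, v i ≠ 0) : IsUnit (of fun r c => v c r) := by
  rw [← linearIndependent_cols_iff_isUnit]
  refine Module.End.eigenvectors_linearIndependent' (mulVecLin T) μ hμ v fun i => ?_
  exact Module.End.hasEigenvector_iff.mpr ⟨Module.End.mem_eigenspace_iff.mpr (hv i), hv0 i⟩

lemma conjTranspose_mul_self_eq_of_conjTranspose_mul_eq {α n : Type*} [CommRing α] [StarRing α]
    [Fintype n] [DecidableEq n] {X Y D : Matrix n n α} (hX : IsUnit X) (h : Yᴴ * X = D) :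
    Yᴴ * Y = D * (Xᴴ * X)⁻¹ * Dᴴ := by
  have hYH : Yᴴ = D * X⁻¹ := by
    rw [← h, mul_nonsing_inv_cancel_right _ _ ((isUnit_iff_isUnit_det X).mp hX)]
  have hY : Y = (X⁻¹)ᴴ * Dᴴ := by
    rw [← conjTranspose_conjTranspose Y, hYH, conjTranspose_mul]
  rw [hYH, hY, conjTranspose_nonsing_inv, Matrix.mul_inv_rev]
  simp only [Matrix.mul_assoc]

lemma diagonal_mul_inv_mul_conjTranspose_apply {K n : Type*} [Field K] [StarRing K] [Fintype n]
    [DecidableEq n] (d : n → K) (G : Matrix n n K) (i j : n) :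
    (diagonal d * G⁻¹ * (diagonal d)ᴴ) i j = d i * star (d j) * adjugate G i j / G.det := by
  simp [inv_def, diagonal_conjTranspose, Ring.inverse_eq_inv']
  ring

lemma adjugate_mul_adjugate_sub_fin_three {α : Type*} [CommRing α]
    (G : Matrix (Fin 3) (Fin 3) α) :
    adjugate G 0 0 * adjugate G 1 1 - adjugate G 0 1 * adjugate G 1 0 = G.det * G 2 2 := by
  simp [adjugate_fin_three, det_fin_three]
  ring

lemma Matrix.IsHermitian.sq_norm_apply {n : Type*} {A : Matrix n n ℂ} (hA : A.IsHermitian)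
    (i j : n) : (‖A i j‖ ^ 2 : ℂ) = A i j * A j i := by
  rw [← Complex.mul_conj', ← hA.apply j i]
  rfl

lemma Matrix.IsHermitian.star_det {α n : Type*} [CommRing α] [StarRing α] [Fintype n]
    [DecidableEq n] {A : Matrix n n α} (hA : A.IsHermitian) : star A.det = A.det := by
  rw [← det_conjTranspose, hA.eq]

lemma norm_det_eq_norm_prod_of_rescaled_inv {G : Matrix (Fin 3) (Fin 3) ℂ} (hG : G.IsHermitian)
    (hG1 : ∀ i, G i i = 1) {d : Fin 3 → ℂ}
    (hH1 : ∀ i, (diagonal d * G⁻¹ * (diagonal d)ᴴ) i i = 1)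
    (hH10 : ‖(diagonal d * G⁻¹ * (diagonal d)ᴴ) 1 0‖ = ‖G 1 0‖) :
    ‖G.det‖ = ‖∏ i, d i‖ := by
  simp only [diagonal_mul_inv_mul_conjTranspose_apply] at hH1 hH10
  have hΔ : G.det ≠ 0 := fun h => by simpa [h] using hH1 0
  have hdiag : ∀ i, (‖d i‖ ^ 2 : ℂ) * adjugate G i i = G.det := fun i => by
    have := hH1 i
    rwa [div_eq_one_iff_eq hΔ, Complex.star_def, Complex.mul_conj'] at this
  have hd : ∀ i, (‖d i‖ ^ 2 : ℂ) ≠ 0 := fun i h => hΔ (by simp [← hdiag i, h])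
  have hangle : adjugate G 0 1 * adjugate G 1 0 =
      G 0 1 * G 1 0 * (adjugate G 0 0 * adjugate G 1 1) := by
    rw [norm_div, norm_mul, norm_mul, norm_star, div_eq_iff (norm_ne_zero_iff.mpr hΔ)] at hH10
    have hsq := congrArg (fun r : ℝ => (r ^ 2 : ℂ)) hH10
    simp only [Complex.ofReal_mul, mul_pow] at hsq
    rw [hG.sq_norm_apply, hG.adjugate.sq_norm_apply, ← Complex.mul_conj' G.det,
      ← Complex.star_def, hG.star_det] at hsq
    apply mul_left_cancel₀ (mul_ne_zero (hd 1) (hd 0))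
    linear_combination
      hsq - G 1 0 * G 0 1 * (G.det * hdiag 0 + ‖d 0‖ ^ 2 * adjugate G 0 0 * hdiag 1)
  have hΔ_prod : G.det = adjugate G 0 0 * adjugate G 1 1 * adjugate G 2 2 := by
    have hjacobi := adjugate_mul_adjugate_sub_fin_three G
    have hA22 : adjugate G 2 2 = 1 - G 0 1 * G 1 0 := by simp [adjugate_fin_three, hG1]
    rw [hG1, hangle] at hjacobi
    rw [hA22]
    linear_combination -hjacobi
  have hΔ_sq : G.det ^ 2 = ((‖d 0‖ * ‖d 1‖ * ‖d 2‖ : ℝ) : ℂ) ^ 2 := by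
    apply mul_left_cancel₀ hΔ
    calc G.det * G.det ^ 2
        = (‖d 0‖ ^ 2 * adjugate G 0 0) * (‖d 1‖ ^ 2 * adjugate G 1 1) *
            (‖d 2‖ ^ 2 * adjugate G 2 2) := by
          simp only [hdiag]; ring
      _ = _ := by rw [hΔ_prod]; push_cast; ring
  have hnorm_sq := congrArg (‖·‖) hΔ_sq
  simp only [norm_pow, Complex.norm_real, Real.norm_eq_abs, abs_mul, abs_norm] at hnorm_sq
  rw [Fin.prod_univ_three, norm_mul, norm_mul]
  exact (pow_left_inj₀ (norm_nonneg _) (by positivity) two_ne_zero).mp hnorm_sq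

theorem abs_det_eq_of_weak_angle_test (T : Matrix (Fin 3) (Fin 3) ℂ)
    (lam : Fin 3 → ℂ) (x y : Fin 3 → Fin 3 → ℂ)
    (hlam : Function.Injective lam)
    (hx : ∀ i, T.mulVec (x i) = lam i • x i)
    (hxu : ∀ i, hinner (x i) (x i) = 1)
    (hy : ∀ i, Tᴴ.mulVec (y i) = (starRingEnd ℂ) (lam i) • y i)
    (hyu : ∀ i, hinner (y i) (y i) = 1)
    (X Y : Matrix (Fin 3) (Fin 3) ℂ)
    (hX : X = Matrix.of fun i j => x j i)
    (hY : Y = Matrix.of fun i j => y j i)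
    (hwat : ∀ i j : Fin 3, i < j →
      ‖hinner (x i) (x j)‖ = ‖hinner (y i) (y j)‖) :
    ‖X.det‖ = ‖Y.det‖ := by
  subst hX hY
  have hXu := isUnit_of_eigenvector_cols hlam hx
    fun i => ne_zero_of_hinner_self_ne_zero (by simp [hxu i])
  have hYX := conjTranspose_mul_eq_diagonal_of_eigenvectors hlam hx hy
  have hYY := conjTranspose_mul_self_eq_of_conjTranspose_mul_eq hXu hYX
  have hGram := norm_det_eq_norm_prod_of_rescaled_inv (isHermitian_conjTranspose_mul_self _)
    (fun i => by rw [conjTranspose_mul_apply_eq_hinner, hxu])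
    (fun i => by rw [← hYY, conjTranspose_mul_apply_eq_hinner, hyu])
    (by simpa only [← hYY, conjTranspose_mul_apply_eq_hinner] using (hwat 0 1 (by decide)).symm)
  rw [← det_diagonal, ← hYX] at hGram
  simp only [det_mul, det_conjTranspose, norm_mul, norm_star] at hGram
  exact mul_right_cancel₀ (norm_ne_zero_iff.mpr ((isUnit_iff_isUnit_det _).mp hXu).ne_zero) hGram
end

section
/- Let T ∈ M_n(ℂ) have n distinct eigenvalues λ_1,…,λ_n with corresponding unit eigenvectors x_1,…,x_n, and let y_1,…,y_n be unit eigenvectors of T* corresponding to conj(λ_1),…,conj(λ_n). Suppose T satisfies the Linear Strong Angle Test and that ⟨x_i, x_j⟩ ≠ 0 for all 1 ≤ i, j ≤ n. For each i set γ_i = ⟨y_1, y_i⟩ / ⟨x_1, x_i⟩. Then |γ_i| = 1 for each i, and the (unique) linear map R : ℂⁿ → ℂⁿ determined by R x_i = γ_i y_i for 1 ≤ i ≤ n is unitary. -/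
/-!
Applying the angle test to the triples `(1, i, j)` and using that Gram matrices are Hermitian
gives `γᵢ * conj γⱼ * ⟨yᵢ, yⱼ⟩ = ⟨xᵢ, xⱼ⟩`: the vectors `γᵢ yᵢ` have the same Gram matrix as the
eigenvectors `xᵢ`. For `i = j` this is `|γᵢ|² = 1`, and a matrix carrying a basis to a family with
the same Gram matrix is unitary.
-/

open Matrix

section TripleProduct

variable {ι R : Type*}

def tripleProduct [Mul R] (A : Matrix ι ι R) (i j k : ι) : R := A i j * A j k * A k i

theorem tripleProduct_rotate [CommSemigroup R] (A : Matrix ι ι R) (i j k : ι) :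
    tripleProduct A j k i = tripleProduct A i j k := by
  simp only [tripleProduct, mul_comm, mul_left_comm]

theorem Matrix.IsHermitian.tripleProduct_reverse [CommMonoid R] [StarMul R] {A : Matrix ι ι R}
    (hA : A.IsHermitian) (i j k : ι) :
    tripleProduct A k j i = star (tripleProduct A i j k) := by
  simp only [tripleProduct, star_mul, hA.apply, mul_comm, mul_left_comm]

theorem Matrix.IsHermitian.tripleProduct_eq_of_le_of_le [LinearOrder ι] [CommMonoid R] [StarMul R]
    {A B : Matrix ι ι R} (hA : A.IsHermitian) (hB : B.IsHermitian)
    (h : ∀ i j k, i ≤ j → j ≤ k → tripleProduct A i j k = tripleProduct B i j k)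
    {z i j : ι} (hi : z ≤ i) (hj : z ≤ j) : tripleProduct A z i j = tripleProduct B z i j := by
  rcases le_total i j with hij | hji
  · exact h z i j hi hij
  -- `(z, i, j)` is a rotation of the reversal of the ordered triple `(z, j, i)`
  · rw [← tripleProduct_rotate A, ← tripleProduct_rotate B, hA.tripleProduct_reverse,
      hB.tripleProduct_reverse, h z j i hj hji]

theorem Matrix.IsHermitian.div_mul_star_div_mul_eq_of_tripleProduct_eq [Field R] [StarRing R]
    {A B : Matrix ι ι R} (hA : A.IsHermitian) (hB : B.IsHermitian) {z i j : ι}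
    (h : tripleProduct A z i j = tripleProduct B z i j) (hi : A z i ≠ 0) (hj : A z j ≠ 0) :
    B z i / A z i * star (B z j / A z j) * B i j = A i j := by
  have hj' : star (A z j) ≠ 0 := star_ne_zero.mpr hj
  rw [tripleProduct, tripleProduct, ← hA.apply j z, ← hB.apply j z] at h
  rw [star_div₀, div_mul_div_comm, div_mul_eq_mul_div, div_eq_iff (mul_ne_zero hi hj')]
  linear_combination -h

end TripleProduct

section Hinner

variable {n : ℕ}

theorem hinner_smul_smul (a b : ℂ) (u v : Fin n → ℂ) :
    hinner (a • u) (b • v) = a * star b * hinner u v := by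
  simp only [hinner, Finset.mul_sum, Pi.smul_apply, smul_eq_mul, map_mul, Complex.star_def]
  exact Finset.sum_congr rfl fun _ _ => by ring

noncomputable def hinnerGram (v : Fin n → Fin n → ℂ) : Matrix (Fin n) (Fin n) ℂ :=
  of fun i j => hinner (v i) (v j)

theorem isHermitian_hinnerGram (v : Fin n → Fin n → ℂ) : (hinnerGram v).IsHermitian := by
  ext i j
  simp [hinnerGram, hinner, mul_comm]

theorem hinner_eq_conjTranspose_mul_apply (v : Fin n → Fin n → ℂ) (i j : Fin n) :
    hinner (v j) (v i) = ((of v)ᵀᴴ * (of v)ᵀ) i j := by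
  simp [hinner, mul_apply, mul_comm]

theorem mul_transpose_of (R : Matrix (Fin n) (Fin n) ℂ) (v : Fin n → Fin n → ℂ) :
    R * (of v)ᵀ = (of fun i => R *ᵥ v i)ᵀ := by
  ext a i
  simp [mul_apply, mulVec, dotProduct]

theorem mem_unitaryGroup_of_hinner_mulVec {x : Fin n → Fin n → ℂ} (hx : LinearIndependent ℂ x)
    {R : Matrix (Fin n) (Fin n) ℂ} (h : ∀ i j, hinner (R *ᵥ x i) (R *ᵥ x j) = hinner (x i) (x j)) :
    R ∈ unitaryGroup (Fin n) ℂ := by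
  set Q := (of x)ᵀ
  have hQ : IsUnit Q := linearIndependent_cols_iff_isUnit.mp hx
  have hgram : Qᴴ * (Rᴴ * R) * Q = Qᴴ * 1 * Q := by
    ext i j
    calc (Qᴴ * (Rᴴ * R) * Q) i j = ((R * Q)ᴴ * (R * Q)) i j := by
          simp only [conjTranspose_mul, Matrix.mul_assoc]
      _ = hinner (x j) (x i) := by
          rw [mul_transpose_of, ← hinner_eq_conjTranspose_mul_apply, h]
      _ = (Qᴴ * 1 * Q : Matrix (Fin n) (Fin n) ℂ) i j := by
          rw [Matrix.mul_one, hinner_eq_conjTranspose_mul_apply]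
  rw [mem_unitaryGroup_iff']
  exact ((isUnit_conjTranspose Q).mpr hQ).mul_left_cancel (hQ.mul_right_cancel hgram)

end Hinner

theorem Matrix.linearIndependent_of_mulVec_eq_smul {ι m K : Type*} [Fintype m] [DecidableEq m]
    [Field K] {T : Matrix m m K} {lam : ι → K} (hlam : Function.Injective lam)
    {v : ι → m → K} (hv₀ : ∀ i, v i ≠ 0) (hv : ∀ i, T *ᵥ v i = lam i • v i) :
    LinearIndependent K v :=
  Module.End.eigenvectors_linearIndependent' (mulVecLin T) lam hlam v fun i =>
    ⟨Module.End.mem_eigenspace_iff.mpr (hv i), hv₀ i⟩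

theorem gamma_unimodular_and_R_unitary_general (n : ℕ) (hn : 0 < n)
    (T : Matrix (Fin n) (Fin n) ℂ)
    (lam : Fin n → ℂ) (x y : Fin n → Fin n → ℂ)
    (hlam : Function.Injective lam)
    (hx : ∀ i, T.mulVec (x i) = lam i • x i)
    (hxu : ∀ i, hinner (x i) (x i) = 1)
    (hyu : ∀ i, hinner (y i) (y i) = 1)
    (hlsat : ∀ i j k : Fin n, i ≤ j → j ≤ k →
        hinner (x i) (x j) * hinner (x j) (x k) * hinner (x k) (x i)
          = hinner (y i) (y j) * hinner (y j) (y k) * hinner (y k) (y i))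
    (hnz : ∀ i j : Fin n, hinner (x i) (x j) ≠ 0) :
    (∀ i : Fin n,
        ‖hinner (y ⟨0, hn⟩) (y i) / hinner (x ⟨0, hn⟩) (x i)‖ = 1) ∧
    (∀ R : Matrix (Fin n) (Fin n) ℂ,
        (∀ i : Fin n,
          R.mulVec (x i)
            = (hinner (y ⟨0, hn⟩) (y i) / hinner (x ⟨0, hn⟩) (x i)) • y i) →
        R ∈ Matrix.unitaryGroup (Fin n) ℂ) := by
  set z : Fin n := ⟨0, hn⟩
  set γ := fun i => hinner (y z) (y i) / hinner (x z) (x i)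
  have hX := isHermitian_hinnerGram x
  have hY := isHermitian_hinnerGram y
  have hgram : ∀ i j, hinner (γ i • y i) (γ j • y j) = hinner (x i) (x j) := fun i j => by
    rw [hinner_smul_smul]
    exact hX.div_mul_star_div_mul_eq_of_tripleProduct_eq hY
      (hX.tripleProduct_eq_of_le_of_le hY hlsat (Nat.zero_le i) (Nat.zero_le j)) (hnz z i) (hnz z j)
  refine ⟨fun i => ?_, fun R hR => ?_⟩
  · have hγ := hgram i i
    rw [hinner_smul_smul, hxu, hyu, mul_one, Complex.star_def, Complex.mul_conj] at hγ
    rw [Complex.norm_def, Complex.ofReal_eq_one.mp hγ, Real.sqrt_one]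
  · have hx₀ : ∀ i, x i ≠ 0 := fun i h0 => by simpa [h0, hinner] using hxu i
    exact mem_unitaryGroup_of_hinner_mulVec (linearIndependent_of_mulVec_eq_smul hlam hx₀ hx)
      fun i j => by rw [hR, hR, hgram]

theorem gamma_unimodular_and_R_unitary (n : ℕ) (hn : 0 < n)
    (T : Matrix (Fin n) (Fin n) ℂ)
    (lam : Fin n → ℂ) (x y : Fin n → Fin n → ℂ)
    (hlam : Function.Injective lam)
    (hx : ∀ i, T.mulVec (x i) = lam i • x i)
    (hxu : ∀ i, hinner (x i) (x i) = 1)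
    (hy : ∀ i, Tᴴ.mulVec (y i) = (starRingEnd ℂ) (lam i) • y i)
    (hyu : ∀ i, hinner (y i) (y i) = 1)
    (hlsat : ∀ i j k : Fin n, i ≤ j → j ≤ k →
        hinner (x i) (x j) * hinner (x j) (x k) * hinner (x k) (x i)
          = hinner (y i) (y j) * hinner (y j) (y k) * hinner (y k) (y i))
    (hnz : ∀ i j : Fin n, hinner (x i) (x j) ≠ 0) :
    (∀ i : Fin n,
        ‖hinner (y ⟨0, hn⟩) (y i) / hinner (x ⟨0, hn⟩) (x i)‖ = 1) ∧
    (∀ R : Matrix (Fin n) (Fin n) ℂ,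
        (∀ i : Fin n,
          R.mulVec (x i)
            = (hinner (y ⟨0, hn⟩) (y i) / hinner (x ⟨0, hn⟩) (x i)) • y i) →
        R ∈ Matrix.unitaryGroup (Fin n) ℂ) :=
  gamma_unimodular_and_R_unitary_general n hn T lam x y hlam hx hxu hyu hlsat hnz
end

section
/- Let T ∈ M_n(ℂ) and let U ∈ M_n(ℂ) be the diagonal matrix diag(1, 1, …, 1, −1) (all diagonal entries 1 except the last, which is −1). If T = U T* U, then T is UECSM. -/
/-!
Let `R = 1 - 2 e e*` be the Householder reflection of the last basis vector `e`. Since `R` is a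
Hermitian involution, `T = R T* R` says that `A = T R` is Hermitian, and `T = A R`. Diagonalise
`A = V D V*`, choosing the phases of the eigenvectors so that `w = V* e` is real; then
`T = V (D R') V*` with `R' = 1 - 2 w wᵀ` real. The projection `P = w wᵀ` is symmetric, so
`W = 1 + (i - 1) P` is a symmetric unitary with `W² = R'`, and `D W² = W* (W D W) W` exhibits
`D R'` as unitarily equivalent to the symmetric matrix `W D W`.
-/

open Matrix

theorem one_add_smul_mul_one_add_smul {R A : Type*} [CommSemiring R] [Ring A] [Algebra R A]
    {p : A} (hp : IsIdempotentElem p) (a b : R) :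
    (1 + a • p) * (1 + b • p) = 1 + (a + b + a * b) • p := by
  simp only [mul_add, add_mul, one_mul, mul_one, smul_mul_smul, hp.eq, add_smul]
  abel

theorem IsIdempotentElem.one_sub_two_smul_mul_self {R A : Type*} [CommRing R] [Ring A]
    [Algebra R A] {p : A} (hp : IsIdempotentElem p) :
    (1 - (2 : R) • p) * (1 - (2 : R) • p) = 1 := by
  simp only [mul_sub, sub_mul, one_mul, mul_one, smul_mul_smul, hp.eq]
  module

theorem Complex.exists_mul_eq_norm (z : ℂ) : ∃ u : ℂ, star u * u = 1 ∧ u * z = ‖z‖ := by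
  refine ⟨exp (-(z.arg * I)), ?_, ?_⟩
  · rw [RCLike.star_def, ← exp_conj, ← exp_add]
    simp
  · calc exp (-(z.arg * I)) * z = exp (-(z.arg * I)) * (‖z‖ * exp (z.arg * I)) := by
          rw [norm_mul_exp_arg_mul_I]
      _ = ‖z‖ := by rw [mul_left_comm, ← exp_add, neg_add_cancel, exp_zero, mul_one]

section
variable {ι : Type*} [Fintype ι] [DecidableEq ι]

theorem Matrix.diagonal_mem_unitaryGroup {α : Type*} [CommRing α] [StarRing α] {d : ι → α}
    (hd : ∀ i, star (d i) * d i = 1) : diagonal d ∈ unitaryGroup ι α := by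
  rw [mem_unitaryGroup_iff', star_eq_conjTranspose, diagonal_conjTranspose, diagonal_mul_diagonal,
    ← diagonal_one]
  exact congrArg diagonal (funext hd)

omit [DecidableEq ι] in
theorem Matrix.isIdempotentElem_vecMulVec_star {α : Type*} [CommRing α] [StarRing α] {v : ι → α}
    (hv : star v ⬝ᵥ v = 1) : IsIdempotentElem (vecMulVec v (star v)) := by
  rw [IsIdempotentElem, vecMulVec_mul_vecMulVec, hv, one_smul]

def Matrix.householder (e : ι → ℂ) : Matrix ι ι ℂ := 1 - (2 : ℂ) • vecMulVec e (star e)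

theorem Matrix.householder_mul_self {e : ι → ℂ} (he : star e ⬝ᵥ e = 1) :
    householder e * householder e = 1 :=
  (isIdempotentElem_vecMulVec_star he).one_sub_two_smul_mul_self

omit [Fintype ι] in
theorem Matrix.conjTranspose_householder (e : ι → ℂ) : (householder e)ᴴ = householder e := by
  simp [householder, conjTranspose_vecMulVec]

theorem Matrix.conjTranspose_mul_householder_mul {V : Matrix ι ι ℂ} (hV : V ∈ unitaryGroup ι ℂ)
    (e : ι → ℂ) : Vᴴ * householder e * V = householder (Vᴴ *ᵥ e) := by
  rw [householder, householder, mul_sub, sub_mul, mul_one, ← star_eq_conjTranspose, hV.1,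
    Matrix.mul_smul, Matrix.smul_mul, mul_vecMulVec, vecMulVec_mul, star_eq_conjTranspose,
    star_mulVec, conjTranspose_conjTranspose]

theorem Matrix.exists_unitary_symm_mul_self_eq_one_sub_two_smul {P : Matrix ι ι ℂ}
    (hP : IsIdempotentElem P) (hPt : Pᵀ = P) (hPh : Pᴴ = P) :
    ∃ W ∈ unitaryGroup ι ℂ, Wᵀ = W ∧ W * W = 1 - (2 : ℂ) • P := by
  refine ⟨1 + (Complex.I - 1) • P, ?_, by simp [hPt], ?_⟩
  · have hstar : star (1 + (Complex.I - 1) • P) = 1 + (-Complex.I - 1) • P := by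
      rw [star_eq_conjTranspose, conjTranspose_add, conjTranspose_one, conjTranspose_smul, hPh]
      simp [Complex.conj_I]
    rw [mem_unitaryGroup_iff', hstar, one_add_smul_mul_one_add_smul hP,
      show -Complex.I - 1 + (Complex.I - 1) + (-Complex.I - 1) * (Complex.I - 1) = 0 by
        linear_combination -Complex.I_sq,
      zero_smul, add_zero]
  · rw [one_add_smul_mul_one_add_smul hP, sub_eq_add_neg (1 : Matrix ι ι ℂ), ← neg_smul]
    congr 2
    linear_combination Complex.I_sq

theorem Matrix.IsHermitian.exists_unitary_diagonalization_conjTranspose_mulVec_real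
    {A : Matrix ι ι ℂ} (hA : A.IsHermitian) (e : ι → ℂ) :
    ∃ V ∈ unitaryGroup ι ℂ, ∃ d : ι → ℝ,
      A = V * diagonal (fun i => (d i : ℂ)) * Vᴴ ∧ star (Vᴴ *ᵥ e) = Vᴴ *ᵥ e := by
  set V₀ : Matrix ι ι ℂ := (hA.eigenvectorUnitary : Matrix ι ι ℂ)
  choose u hu_unit hu_norm using fun i => Complex.exists_mul_eq_norm ((V₀ᴴ *ᵥ e) i)
  refine ⟨V₀ * (diagonal u)ᴴ,
    mul_mem hA.eigenvectorUnitary.2 (Unitary.star_mem (diagonal_mem_unitaryGroup hu_unit)),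
    hA.eigenvalues, ?_, ?_⟩
  · set D : Matrix ι ι ℂ := diagonal (fun i => (hA.eigenvalues i : ℂ))
    have hphase : (diagonal u)ᴴ * D * diagonal u = D := by
      rw [diagonal_conjTranspose, diagonal_mul_diagonal, diagonal_mul_diagonal]
      congr 1
      funext i
      rw [mul_right_comm, Pi.star_apply, hu_unit, one_mul]
    calc A = V₀ * D * V₀ᴴ := by
          rw [← star_eq_conjTranspose]; exact hA.spectral_theorem
      _ = V₀ * ((diagonal u)ᴴ * D * diagonal u) * V₀ᴴ := by rw [hphase]
      _ = V₀ * (diagonal u)ᴴ * D * (V₀ * (diagonal u)ᴴ)ᴴ := by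
          simp only [conjTranspose_mul, conjTranspose_conjTranspose, mul_assoc]
  · rw [conjTranspose_mul, conjTranspose_conjTranspose, ← mulVec_mulVec]
    funext i
    rw [Pi.star_apply, mulVec_diagonal, hu_norm, RCLike.star_def, Complex.conj_ofReal]

end

namespace UECSM

variable {n : ℕ}

theorem unitary_conj {T V : Matrix (Fin n) (Fin n) ℂ} (hT : UECSM T)
    (hV : V ∈ unitaryGroup (Fin n) ℂ) : UECSM (V * T * Vᴴ) := by
  obtain ⟨U, S, hU, hS, rfl⟩ := hT
  exact ⟨V * U, S, mul_mem hV hU, hS, by simp only [conjTranspose_mul, mul_assoc]⟩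

theorem symm_mul_mul_self {S W : Matrix (Fin n) (Fin n) ℂ} (hS : Sᵀ = S)
    (hW : W ∈ unitaryGroup (Fin n) ℂ) (hWt : Wᵀ = W) : UECSM (S * (W * W)) := by
  have hWW : Wᴴ * W = 1 := by rw [← star_eq_conjTranspose]; exact hW.1
  refine ⟨Wᴴ, W * S * W, Unitary.star_mem hW, by simp [hS, hWt, mul_assoc], ?_⟩
  rw [conjTranspose_conjTranspose]
  simp only [← mul_assoc, hWW, one_mul]

theorem isHermitian_mul_householder {A : Matrix (Fin n) (Fin n) ℂ} (hA : A.IsHermitian)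
    {e : Fin n → ℂ} (he : star e ⬝ᵥ e = 1) : UECSM (A * householder e) := by
  obtain ⟨V, hV, d, rfl, hw⟩ := hA.exists_unitary_diagonalization_conjTranspose_mulVec_real e
  set w := Vᴴ *ᵥ e
  have hVV : V * Vᴴ = 1 := by rw [← star_eq_conjTranspose]; exact hV.2
  have hw_unit : star w ⬝ᵥ w = 1 := by
    rw [star_mulVec, conjTranspose_conjTranspose, ← dotProduct_mulVec, mulVec_mulVec, hVV,
      one_mulVec, he]
  obtain ⟨W, hW, hWt, hWW⟩ := exists_unitary_symm_mul_self_eq_one_sub_two_smul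
    (isIdempotentElem_vecMulVec_star hw_unit) (by rw [transpose_vecMulVec, hw])
    (by rw [conjTranspose_vecMulVec, star_star])
  convert (symm_mul_mul_self (diagonal_transpose _) hW hWt).unitary_conj hV using 1
  rw [hWW, ← householder, ← conjTranspose_mul_householder_mul hV e]
  simp only [← mul_assoc]
  rw [mul_assoc _ V Vᴴ, hVV, mul_one]

theorem of_eq_householder_mul_conjTranspose_mul {T : Matrix (Fin n) (Fin n) ℂ}
    {e : Fin n → ℂ} (he : star e ⬝ᵥ e = 1) (h : T = householder e * Tᴴ * householder e) :
    UECSM T := by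
  have hTR : T * householder e = householder e * Tᴴ := by
    conv_lhs => rw [h]
    rw [mul_assoc, householder_mul_self he, mul_one]
  have hA : (T * householder e).IsHermitian := by
    rw [IsHermitian, conjTranspose_mul, conjTranspose_householder, hTR]
  convert isHermitian_mul_householder hA he using 1
  rw [mul_assoc, householder_mul_self he, mul_one]

end UECSM

theorem uecsm_of_signature_symmetry (n : ℕ) (hn : 0 < n)
    (T : Matrix (Fin n) (Fin n) ℂ)
    (U : Matrix (Fin n) (Fin n) ℂ)
    (hU : U = Matrix.diagonal (fun i : Fin n => if (i : ℕ) = n - 1 then (-1 : ℂ) else 1))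
    (h : T = U * Tᴴ * U) :
    UECSM T := by
  set e : Fin n → ℂ := Pi.single ⟨n - 1, by omega⟩ 1
  have he : star e ⬝ᵥ e = 1 := by simp [e]
  have hU_householder : U = householder e := by
    rw [hU, householder, Pi.star_single, star_one, ← single_eq_single_vecMulVec_single]
    ext i j
    simp only [diagonal_apply, Matrix.sub_apply, one_apply, Matrix.smul_apply, single_apply,
      Fin.ext_iff, smul_eq_mul]
    split_ifs <;> first | omega | norm_num
  rw [hU_householder] at h
  exact UECSM.of_eq_householder_mul_conjTranspose_mul he h
end

section
/- Let T_1, T_2 ∈ M_4(ℂ) be the matrices with rows (1,0,0,0), (0,0,2,0), (0,0,0,2), (0,0,0,0) and (1,0,0,0), (0,0,1,0), (0,0,0,2), (0,0,0,0), respectively. Then T_1 is UECSM and T_2 is not UECSM. -/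
open Matrix

set_option maxHeartbeats 2000000

section aux

open Complex

noncomputable abbrev myU : Matrix (Fin 4) (Fin 4) ℂ :=
  !![1/2, 1/2, 1/2, 1/2;
     1/2, -1/2, I/2, -I/2;
     1/2, 1/2, -1/2, -1/2;
     1/2, -1/2, -I/2, I/2]

noncomputable abbrev myS : Matrix (Fin 4) (Fin 4) ℂ :=
  !![5/4, 1/4, -1/4 - I/2, -1/4 + I/2;
     1/4, -3/4, 3/4 - I/2, 3/4 + I/2;
     -1/4 - I/2, 3/4 - I/2, 1/4 + I, 1/4;
     -1/4 + I/2, 3/4 + I/2, 1/4, 1/4 - I]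

lemma myU_conjT : myUᴴ =
    !![1/2, 1/2, 1/2, 1/2;
       1/2, -1/2, 1/2, -1/2;
       1/2, -I/2, -1/2, I/2;
       1/2, I/2, -1/2, -I/2] := by
  ext i j
  fin_cases i <;> fin_cases j <;>
    simp [Matrix.conjTranspose_apply, Matrix.vecHead, Matrix.vecTail, Complex.ext_iff] <;> norm_num

end aux

theorem example_T1_uecsm_T2_not :
    UECSM (!![1, 0, 0, 0; 0, 0, 2, 0; 0, 0, 0, 2; 0, 0, 0, 0] : Matrix (Fin 4) (Fin 4) ℂ) ∧
    ¬ UECSM (!![1, 0, 0, 0; 0, 0, 1, 0; 0, 0, 0, 2; 0, 0, 0, 0] : Matrix (Fin 4) (Fin 4) ℂ) := by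
  constructor
  · refine ⟨myU, myS, ?_, ?_, ?_⟩
    · rw [Matrix.mem_unitaryGroup_iff]
      show myU * myUᴴ = 1
      rw [myU_conjT]
      ext i j
      fin_cases i <;> fin_cases j <;>
        simp [Matrix.mul_apply, Fin.sum_univ_four, Matrix.vecHead, Matrix.vecTail, Complex.ext_iff] <;> norm_num
    · ext i j
      fin_cases i <;> fin_cases j <;> simp
    · have hUS : myU * myS =
          !![1/2, 1/2, 1/2, 1/2; 1, 1, -1, -1; 1, -1, -Complex.I, Complex.I; 0, 0, 0, 0] := by
        ext i j
        fin_cases i <;> fin_cases j <;>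
          simp [Matrix.mul_apply, Fin.sum_univ_four, Matrix.vecHead, Matrix.vecTail, Complex.ext_iff] <;> ring_nf <;>
            norm_num [Complex.ext_iff]
      rw [Matrix.mul_assoc, ← Matrix.mul_assoc, hUS, myU_conjT]
      ext i j
      fin_cases i <;> fin_cases j <;>
        simp [Matrix.mul_apply, Fin.sum_univ_four, Matrix.vecHead, Matrix.vecTail, Complex.ext_iff] <;> ring_nf <;>
          norm_num [Complex.ext_iff]
  · rintro ⟨U, S, hU, hS, hT⟩
    set T : Matrix (Fin 4) (Fin 4) ℂ :=
      !![1, 0, 0, 0; 0, 0, 1, 0; 0, 0, 0, 2; 0, 0, 0, 0] with hTdef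
    have hU1 : Uᴴ * U = 1 := Matrix.mem_unitaryGroup_iff'.mp hU
    -- T conjugate transpose via S
    have hTc : Tᴴ = U * Sᴴ * Uᴴ := by
      rw [hT]
      simp [Matrix.conjTranspose_mul, Matrix.mul_assoc]
    -- sandwich multiplication
    have sand : ∀ A B : Matrix (Fin 4) (Fin 4) ℂ,
        (U * A * Uᴴ) * (U * B * Uᴴ) = U * (A * B) * Uᴴ := by
      intro A B
      calc (U * A * Uᴴ) * (U * B * Uᴴ) = U * A * (Uᴴ * U) * B * Uᴴ := by
            simp only [Matrix.mul_assoc]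
        _ = U * (A * B) * Uᴴ := by rw [hU1]; simp only [Matrix.mul_one, Matrix.mul_assoc]
    have trsand : ∀ A : Matrix (Fin 4) (Fin 4) ℂ,
        Matrix.trace (U * A * Uᴴ) = Matrix.trace A := by
      intro A
      rw [Matrix.trace_mul_comm, ← Matrix.mul_assoc, hU1, Matrix.one_mul]
    -- symmetry of Sᴴ
    have hS2 : (Sᴴ)ᵀ = Sᴴ := by
      ext i j
      simp only [Matrix.transpose_apply, Matrix.conjTranspose_apply]
      congr 1
      conv_lhs => rw [hS]
      rw [Matrix.transpose_apply]
    -- traces of the word and its reverse agree abstractly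
    have key : Matrix.trace (T * T * Tᴴ * T * Tᴴ * Tᴴ)
        = Matrix.trace (Tᴴ * Tᴴ * T * Tᴴ * T * T) := by
      have e1 : T * T * Tᴴ * T * Tᴴ * Tᴴ = U * (S * S * Sᴴ * S * Sᴴ * Sᴴ) * Uᴴ := by
        rw [hTc, hT, sand, sand, sand, sand, sand]
      have e2 : Tᴴ * Tᴴ * T * Tᴴ * T * T = U * (Sᴴ * Sᴴ * S * Sᴴ * S * S) * Uᴴ := by
        rw [hTc, hT, sand, sand, sand, sand, sand]
      rw [e1, e2, trsand, trsand]
      have := Matrix.trace_transpose (S * S * Sᴴ * S * Sᴴ * Sᴴ)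
      rw [← this]
      congr 1
      simp only [Matrix.transpose_mul, hS2, ← hS, Matrix.mul_assoc]
    -- numeric computation contradicts it
    have hTch : Tᴴ = !![1, 0, 0, 0; 0, 0, 0, 0; 0, 1, 0, 0; 0, 0, 2, 0] := by
      ext i j
      fin_cases i <;> fin_cases j <;>
        simp [hTdef, Matrix.conjTranspose_apply, Matrix.vecHead, Matrix.vecTail, Complex.ext_iff] <;> norm_num
    have lhs17 : Matrix.trace (T * T * Tᴴ * T * Tᴴ * Tᴴ) = 17 := by
      have p1 : T * T = !![1, 0, 0, 0; 0, 0, 0, 2; 0, 0, 0, 0; 0, 0, 0, 0] := by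
        ext i j
        fin_cases i <;> fin_cases j <;>
          simp [hTdef, Matrix.mul_apply, Fin.sum_univ_four, Matrix.vecHead, Matrix.vecTail] <;> norm_num
      have p2 : T * T * Tᴴ = !![1, 0, 0, 0; 0, 0, 4, 0; 0, 0, 0, 0; 0, 0, 0, 0] := by
        rw [p1, hTch]
        ext i j
        fin_cases i <;> fin_cases j <;>
          simp [Matrix.mul_apply, Fin.sum_univ_four, Matrix.vecHead, Matrix.vecTail] <;> norm_num
      have p3 : T * T * Tᴴ * T = !![1, 0, 0, 0; 0, 0, 0, 8; 0, 0, 0, 0; 0, 0, 0, 0] := by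
        rw [p2]
        ext i j
        fin_cases i <;> fin_cases j <;>
          simp [hTdef, Matrix.mul_apply, Fin.sum_univ_four, Matrix.vecHead, Matrix.vecTail] <;> norm_num
      have p4 : T * T * Tᴴ * T * Tᴴ = !![1, 0, 0, 0; 0, 0, 16, 0; 0, 0, 0, 0; 0, 0, 0, 0] := by
        rw [p3, hTch]
        ext i j
        fin_cases i <;> fin_cases j <;>
          simp [Matrix.mul_apply, Fin.sum_univ_four, Matrix.vecHead, Matrix.vecTail] <;> norm_num
      have p5 : T * T * Tᴴ * T * Tᴴ * Tᴴ
          = !![1, 0, 0, 0; 0, 16, 0, 0; 0, 0, 0, 0; 0, 0, 0, 0] := by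
        rw [p4, hTch]
        ext i j
        fin_cases i <;> fin_cases j <;>
          simp [Matrix.mul_apply, Fin.sum_univ_four, Matrix.vecHead, Matrix.vecTail] <;> norm_num
      rw [p5]
      simp [Matrix.trace, Fin.sum_univ_four, Matrix.vecHead, Matrix.vecTail]
      norm_num
    have rhs5 : Matrix.trace (Tᴴ * Tᴴ * T * Tᴴ * T * T) = 5 := by
      have q1 : Tᴴ * Tᴴ = !![1, 0, 0, 0; 0, 0, 0, 0; 0, 0, 0, 0; 0, 2, 0, 0] := by
        rw [hTch]
        ext i j
        fin_cases i <;> fin_cases j <;>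
          simp [Matrix.mul_apply, Fin.sum_univ_four, Matrix.vecHead, Matrix.vecTail] <;> norm_num
      have q2 : Tᴴ * Tᴴ * T = !![1, 0, 0, 0; 0, 0, 0, 0; 0, 0, 0, 0; 0, 0, 2, 0] := by
        rw [q1]
        ext i j
        fin_cases i <;> fin_cases j <;>
          simp [hTdef, Matrix.mul_apply, Fin.sum_univ_four, Matrix.vecHead, Matrix.vecTail] <;> norm_num
      have q3 : Tᴴ * Tᴴ * T * Tᴴ = !![1, 0, 0, 0; 0, 0, 0, 0; 0, 0, 0, 0; 0, 2, 0, 0] := by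
        rw [q2, hTch]
        ext i j
        fin_cases i <;> fin_cases j <;>
          simp [Matrix.mul_apply, Fin.sum_univ_four, Matrix.vecHead, Matrix.vecTail] <;> norm_num
      have q4 : Tᴴ * Tᴴ * T * Tᴴ * T
          = !![1, 0, 0, 0; 0, 0, 0, 0; 0, 0, 0, 0; 0, 0, 2, 0] := by
        rw [q3]
        ext i j
        fin_cases i <;> fin_cases j <;>
          simp [hTdef, Matrix.mul_apply, Fin.sum_univ_four, Matrix.vecHead, Matrix.vecTail] <;> norm_num
      have q5 : Tᴴ * Tᴴ * T * Tᴴ * T * T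
          = !![1, 0, 0, 0; 0, 0, 0, 0; 0, 0, 0, 0; 0, 0, 0, 4] := by
        rw [q4]
        ext i j
        fin_cases i <;> fin_cases j <;>
          simp [hTdef, Matrix.mul_apply, Fin.sum_univ_four, Matrix.vecHead, Matrix.vecTail] <;> norm_num
      rw [q5]
      simp [Matrix.trace, Fin.sum_univ_four, Matrix.vecHead, Matrix.vecTail]
      norm_num
    rw [lhs17, rhs5] at key
    norm_num at key
end
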